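/- (Technical lifting lemma, Lemma 4.9.) Let 1 ≤ p < ∞ and let θ ∈ L^p(0,1). Then there exists a measurable function ψ : W → ℝ such that: (1) ψ(x,y₁,y₂) does not depend on y₁, i.e. ψ(x,y₁,y₂) = ψ(x,y₁',y₂) whenever both points lie in W; (2) ψ(x,y₁,y₂) = 0 whenever y₂ ≥ G_0; (3) for every x ∈ (0,1), (1/l(x)) ∫_{Y*(x)} ψ(x,y₁,y₂) dy₁ dy₂ = θ(x); (4) ‖ψ‖_{L^p(W)} ≤ C ‖θ‖_{L^p(0,1)} for a constant C depending only on G_0, l_1 and p. Indeed one may take ψ(x,y₁,y₂) = (12/G_0³)·ṽ(y₂)·θ(x), where v(y₂) = −y₂²/2 + G_0 y₂/2 and ṽ equals v on (0,G_0) and 0 elsewhere. -/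

import Mathlib

/-!
The lift is the product `ψ(x, y₁, y₂) = c ṽ(y₂) θ(x)` of `θ` with a fixed profile `ṽ ≥ 0`
supported in `(0, G₀)`, normalised by `c = 12 / G₀³ = (∫ ṽ)⁻¹`. Since `G ≥ G₀`, every cell
`Y*(x)` lies between the rectangle `(0, l(x)) × (0, G₀)`, which carries all of `ṽ`, and the strip
`(0, l(x)) × ℝ`, so the cell integral is `l(x) θ(x)` whatever the shape of `G`. Likewise `W` lies
in `(0,1) × (0,l₁) × ℝ`, and `c ṽ ≤ 3 / (2 G₀)` on the part `(0,1) × (0,l₁) × (0,G₀)` that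
matters, whence `‖ψ‖_p ≤ 3 / (2 G₀) · (l₁ G₀)^{1/p} ‖θ‖_p`.
-/

open MeasureTheory Set Filter Topology

noncomputable section

/-- The thin domain `R^ε = {(x,y) : x ∈ (0,1), 0 < y < ε G(x, x/ε)}`. -/
def thinDomain (G : ℝ → ℝ → ℝ) (ε : ℝ) : Set (ℝ × ℝ) :=
  {z : ℝ × ℝ | z.1 ∈ Ioo (0 : ℝ) 1 ∧ z.2 ∈ Ioo (0 : ℝ) (ε * G z.1 (z.1 / ε))}

/-- The reference cell `Y* = (0,l₁) × (0,G₁)`. -/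
def Ystar (l1 G1 : ℝ) : Set (ℝ × ℝ) := Ioo (0 : ℝ) l1 ×ˢ Ioo (0 : ℝ) G1

/-- A partition `0 = x₀ < x₁ < ⋯ < x_{N+1} = 1` of the interval `(0,1)` (for a parameter `ε`). -/
structure MeshPartition where
  N : ℕ
  pts : ℕ → ℝ
  pts_zero : pts 0 = 0
  pts_last : pts (N + 1) = 1
  pts_lt : ∀ k ≤ N, pts k < pts (k + 1)

/-- The index `k` such that `x ∈ [x_k, x_{k+1})` (for `x ∈ [0,1)`). -/
def MeshPartition.idx (P : MeshPartition) (x : ℝ) : ℕ :=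
  Nat.findGreatest (fun k => P.pts k ≤ x) P.N

/-- `[x]_ε`, the partition point just below `x`. -/
def MeshPartition.bracket (P : MeshPartition) (x : ℝ) : ℝ := P.pts (P.idx x)

/-- `Γ_{[x]_ε} = (x_{k+1} - x_k) / l(x_k)` for `x ∈ [x_k, x_{k+1})`. -/
def MeshPartition.Gamma (P : MeshPartition) (l : ℝ → ℝ) (x : ℝ) : ℝ :=
  (P.pts (P.idx x + 1) - P.pts (P.idx x)) / l (P.pts (P.idx x))

/-- The unfolding operator `T_ε` associated to a partition, acting on a function `φ` on `R^ε`
(extended by zero to all of `ℝ²` via the indicator of `R^ε`). -/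
def unfoldOp (G : ℝ → ℝ → ℝ) (l : ℝ → ℝ) (ε : ℝ) (P : MeshPartition)
    (φ : ℝ × ℝ → ℝ) : ℝ × ℝ × ℝ → ℝ := fun q =>
  if q.2.1 < l (P.bracket q.1) then
    (thinDomain G ε).indicator φ (P.bracket q.1 + P.Gamma l q.1 * q.2.1, ε * q.2.2)
  else 0

/-- The averaging operator `U_ε`, the formal adjoint of `T_ε`. -/
def avgOp (l : ℝ → ℝ) (ε : ℝ) (P : MeshPartition) (ψ : ℝ × ℝ × ℝ → ℝ) : ℝ × ℝ → ℝ := fun z =>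
  (1 / l (P.bracket z.1)) *
    ∫ y₁ in Ioo (0 : ℝ) (l (P.bracket z.1)),
      ψ (P.bracket z.1 + P.Gamma l z.1 * y₁, (z.1 - P.bracket z.1) / P.Gamma l z.1, z.2 / ε)

/-- The limit set `W = {(x,y₁,y₂) : x ∈ (0,1), 0 < y₁ < l(x), 0 < y₂ < G(x,y₁)}`. -/
def Wset (G : ℝ → ℝ → ℝ) (l : ℝ → ℝ) : Set (ℝ × ℝ × ℝ) :=
  {q | q.1 ∈ Ioo (0 : ℝ) 1 ∧ q.2.1 ∈ Ioo (0 : ℝ) (l q.1) ∧ q.2.2 ∈ Ioo (0 : ℝ) (G q.1 q.2.1)}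

/-- The set `W₀ = {(x,y₁) : x ∈ (0,1), 0 < y₁ < l(x)}`. -/
def W0set (l : ℝ → ℝ) : Set (ℝ × ℝ) :=
  {z : ℝ × ℝ | z.1 ∈ Ioo (0 : ℝ) 1 ∧ z.2 ∈ Ioo (0 : ℝ) (l z.1)}

section GeneralIntegrals

variable {X Y : Type*} [MeasurableSpace X] [MeasurableSpace Y]

theorem setIntegral_eq_of_subset_of_subset_of_forall_diff_eq_zero {μ : Measure X}
    {f : X → ℝ} {s t u : Set X} (ht : MeasurableSet t) (hu : MeasurableSet u)
    (hts : t ⊆ s) (hsu : s ⊆ u) (hf : ∀ x ∈ u \ t, f x = 0) :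
    ∫ x in s, f x ∂μ = ∫ x in t, f x ∂μ := by
  -- `s` need not be measurable: `f = t.indicator f` holds on the measurable `u ⊇ s`.
  have hf_eq : f =ᵐ[μ.restrict s] t.indicator f :=
    ae_restrict_of_ae_restrict_of_subset hsu <| ae_restrict_of_forall_mem hu fun x hx => by
      by_cases hxt : x ∈ t
      · rw [indicator_of_mem hxt]
      · rw [indicator_of_notMem hxt, hf x ⟨hx, hxt⟩]
  rw [integral_congr_ae hf_eq, setIntegral_indicator ht, inter_eq_right.2 hts]

theorem setIntegral_le_of_norm_le_indicator_prod {μ : Measure X} {ν : Measure Y}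
    [SFinite μ] [SFinite ν] {F : X × Y → ℝ} {g : X → ℝ} {s u : Set (X × Y)} {I : Set X}
    {B : Set Y} (hF : AEStronglyMeasurable F ((μ.prod ν).restrict s)) (hu : MeasurableSet u)
    (hsu : s ⊆ u) (hI : MeasurableSet I) (hB : MeasurableSet B) (hνB : ν B ≠ ⊤)
    (hg : IntegrableOn g I μ) (hg0 : ∀ x ∈ I, 0 ≤ g x)
    (hFg : ∀ q ∈ u, ‖F q‖ ≤ (I ×ˢ B).indicator (fun q => g q.1) q) :
    ∫ q in s, F q ∂μ.prod ν ≤ (∫ x in I, g x ∂μ) * ν.real B := by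
  set H := (I ×ˢ B).indicator fun q : X × Y => g q.1
  have : IsFiniteMeasure (ν.restrict B) := isFiniteMeasure_restrict.2 hνB
  have hH : Integrable H (μ.prod ν) := by
    refine (integrable_indicator_iff (hI.prod hB)).2 ?_
    rw [IntegrableOn, ← Measure.prod_restrict]
    simpa using hg.mul_prod (integrable_const (1 : ℝ) (μ := ν.restrict B))
  have hH0 : ∀ q, 0 ≤ H q := fun q =>
    indicator_nonneg (fun q hq => hg0 q.1 (mem_prod.1 hq).1) q
  have hbound : ∀ᵐ q ∂(μ.prod ν).restrict s, ‖F q‖ ≤ H q :=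
    ae_restrict_of_ae_restrict_of_subset hsu (ae_restrict_of_forall_mem hu hFg)
  calc ∫ q in s, F q ∂μ.prod ν
      ≤ ∫ q in s, H q ∂μ.prod ν :=
        integral_mono_ae (hH.integrableOn.mono' hF hbound) hH.integrableOn
          (hbound.mono fun q hq => (Real.le_norm_self _).trans hq)
    _ ≤ ∫ q, H q ∂μ.prod ν := setIntegral_le_integral hH (Eventually.of_forall hH0)
    _ = ∫ q in I ×ˢ B, g q.1 * (fun _ : Y => (1 : ℝ)) q.2 ∂μ.prod ν := by
        simp only [H, integral_indicator (hI.prod hB), mul_one]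
    _ = (∫ x in I, g x ∂μ) * ν.real B := by
        rw [setIntegral_prod_mul g (fun _ : Y => (1 : ℝ)) I B, setIntegral_const, smul_eq_mul,
          mul_one]

end GeneralIntegrals

theorem rpow_one_div_le_mul_of_le_mul_rpow {p A I K M : ℝ} (hp : 0 < p) (hA : 0 ≤ A)
    (hI : 0 ≤ I) (hK : 0 ≤ K) (hM : 0 ≤ M) (h : A ≤ K ^ p * I * M) :
    A ^ (1 / p) ≤ K * M ^ (1 / p) * I ^ (1 / p) := by
  have hKp : (K ^ p) ^ (1 / p) = K := by
    rw [← Real.rpow_mul hK, mul_one_div_cancel hp.ne', Real.rpow_one]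
  calc A ^ (1 / p) ≤ (K ^ p * I * M) ^ (1 / p) := by gcongr
    _ = K * M ^ (1 / p) * I ^ (1 / p) := by
        rw [Real.mul_rpow (by positivity) hM, Real.mul_rpow (by positivity) hI, hKp]
        ring

def parabolicBump (a y : ℝ) : ℝ :=
  if y ∈ Ioo 0 a then -y ^ 2 / 2 + a * y / 2 else 0

section parabolicBump

variable {a : ℝ}

theorem parabolicBump_nonneg (a y : ℝ) : 0 ≤ parabolicBump a y := by
  unfold parabolicBump
  split_ifs with hy
  · nlinarith [hy.1, hy.2]
  · exact le_rfl

theorem parabolicBump_le (a y : ℝ) : parabolicBump a y ≤ a ^ 2 / 8 := by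
  unfold parabolicBump
  split_ifs
  · nlinarith [sq_nonneg (a - 2 * y)]
  · positivity

theorem measurable_parabolicBump (a : ℝ) : Measurable (parabolicBump a) :=
  Measurable.ite measurableSet_Ioo (by fun_prop) measurable_const

theorem setIntegral_parabolicBump (ha : 0 ≤ a) :
    ∫ y in Ioo 0 a, parabolicBump a y = a ^ 3 / 12 := by
  rw [setIntegral_congr_fun (f := parabolicBump a) (g := fun y => -y ^ 2 / 2 + a * y / 2)
      measurableSet_Ioo fun y hy => if_pos hy,
    ← integral_Ioc_eq_integral_Ioo, ← intervalIntegral.integral_of_le ha,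
    intervalIntegral.integral_add
    ((by fun_prop : Continuous fun y : ℝ => -y ^ 2 / 2).intervalIntegrable _ _)
    ((by fun_prop : Continuous fun y : ℝ => a * y / 2).intervalIntegrable _ _)]
  simp only [intervalIntegral.integral_div, intervalIntegral.integral_neg, integral_pow]
  rw [intervalIntegral.integral_const_mul, integral_id]
  ring

end parabolicBump

def bumpLift (a : ℝ) (θ : ℝ → ℝ) (q : ℝ × ℝ × ℝ) : ℝ :=
  12 / a ^ 3 * parabolicBump a q.2.2 * θ q.1

section bumpLift

variable {a : ℝ} {θ : ℝ → ℝ}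

theorem measurable_bumpLift (hθ : Measurable θ) : Measurable (bumpLift a θ) :=
  (measurable_const.mul
    ((measurable_parabolicBump a).comp (measurable_snd.comp measurable_snd))).mul
      (hθ.comp measurable_fst)

theorem bumpLift_of_notMem {q : ℝ × ℝ × ℝ} (hq : q.2.2 ∉ Ioo 0 a) : bumpLift a θ q = 0 := by
  rw [bumpLift, parabolicBump, if_neg hq, mul_zero, zero_mul]

theorem bumpLift_eq_zero_of_le {q : ℝ × ℝ × ℝ} (hq : a ≤ q.2.2) : bumpLift a θ q = 0 :=
  bumpLift_of_notMem fun h => h.2.not_ge hq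

theorem abs_bumpLift_le (ha : 0 < a) (q : ℝ × ℝ × ℝ) :
    |bumpLift a θ q| ≤ 3 / (2 * a) * |θ q.1| := by
  have hcoef : 12 / a ^ 3 * parabolicBump a q.2.2 ≤ 3 / (2 * a) :=
    calc 12 / a ^ 3 * parabolicBump a q.2.2 ≤ 12 / a ^ 3 * (a ^ 2 / 8) := by
          gcongr; exact parabolicBump_le a _
      _ = 3 / (2 * a) := by field_simp; ring
  rw [bumpLift, abs_mul, abs_of_nonneg (by have := parabolicBump_nonneg a q.2.2; positivity)]
  gcongr

theorem one_div_mul_setIntegral_bumpLift {L : ℝ} (ha : 0 < a) (hL : 0 < L) (x : ℝ)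
    {S : Set (ℝ × ℝ)} (hS : Ioo 0 L ×ˢ Ioo 0 a ⊆ S) (hS' : S ⊆ Ioo 0 L ×ˢ univ) :
    1 / L * ∫ y in S, bumpLift a θ (x, y.1, y.2) = θ x := by
  have hvanish : ∀ y ∈ Ioo 0 L ×ˢ univ \ Ioo 0 L ×ˢ Ioo 0 a, bumpLift a θ (x, y.1, y.2) = 0 :=
    fun y hy => bumpLift_of_notMem fun h => hy.2 ⟨hy.1.1, h⟩
  rw [setIntegral_eq_of_subset_of_subset_of_forall_diff_eq_zero
    (measurableSet_Ioo.prod measurableSet_Ioo) (measurableSet_Ioo.prod MeasurableSet.univ)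
    hS hS' hvanish, Measure.volume_eq_prod]
  have hsplit : (fun y : ℝ × ℝ => bumpLift a θ (x, y.1, y.2))
      = fun y => (fun _ : ℝ => 12 / a ^ 3 * θ x) y.1 * parabolicBump a y.2 := by
    funext y; simp only [bumpLift]; ring
  rw [hsplit, setIntegral_prod_mul (fun _ : ℝ => 12 / a ^ 3 * θ x) (parabolicBump a),
    setIntegral_parabolicBump ha.le, setIntegral_const,
    Real.volume_real_Ioo_of_le hL.le, sub_zero, smul_eq_mul]
  field_simp

theorem setIntegral_rpow_abs_bumpLift_le {p L : ℝ} (ha : 0 < a) (hp : 0 < p) (hL : 0 ≤ L)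
    (hθ : Measurable θ) {I : Set ℝ} (hI : MeasurableSet I)
    (hθp : IntegrableOn (fun x => |θ x| ^ p) I) {s : Set (ℝ × ℝ × ℝ)}
    (hs : s ⊆ I ×ˢ (Ioo 0 L ×ˢ univ)) :
    ∫ q in s, |bumpLift a θ q| ^ p
      ≤ (3 / (2 * a)) ^ p * (∫ x in I, |θ x| ^ p) * (L * a) := by
  set K := 3 / (2 * a)
  have hK : 0 ≤ K := by positivity
  have hbound : ∀ q ∈ I ×ˢ (Ioo 0 L ×ˢ univ), ‖|bumpLift a θ q| ^ p‖
      ≤ (I ×ˢ (Ioo 0 L ×ˢ Ioo 0 a)).indicator (fun q => K ^ p * |θ q.1| ^ p) q := by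
    intro q hq
    rw [Real.norm_of_nonneg (by positivity)]
    by_cases hq2 : q.2.2 ∈ Ioo 0 a
    · rw [indicator_of_mem (show q ∈ I ×ˢ (Ioo 0 L ×ˢ Ioo 0 a) from ⟨hq.1, hq.2.1, hq2⟩),
        ← Real.mul_rpow hK (abs_nonneg _)]
      gcongr
      exact abs_bumpLift_le ha q
    · rw [bumpLift_of_notMem hq2, abs_zero, Real.zero_rpow hp.ne']
      exact indicator_nonneg (fun _ _ => by positivity) q
  have hmeas : Measurable fun q => |bumpLift a θ q| ^ p :=
    (measurable_bumpLift hθ).abs.pow_const p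
  have hB : MeasurableSet (Ioo (0 : ℝ) L ×ˢ Ioo 0 a) := measurableSet_Ioo.prod measurableSet_Ioo
  have hBfin : volume (Ioo (0 : ℝ) L ×ˢ Ioo 0 a) ≠ ⊤ := by
    rw [Measure.volume_eq_prod, Measure.prod_prod]
    exact ENNReal.mul_ne_top measure_Ioo_lt_top.ne measure_Ioo_lt_top.ne
  calc ∫ q in s, |bumpLift a θ q| ^ p
      ≤ (∫ x in I, K ^ p * |θ x| ^ p) * volume.real (Ioo (0 : ℝ) L ×ˢ Ioo 0 a) :=
        setIntegral_le_of_norm_le_indicator_prod (μ := volume) (ν := volume)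
          hmeas.aestronglyMeasurable (hI.prod (measurableSet_Ioo.prod MeasurableSet.univ)) hs hI
          hB hBfin (hθp.const_mul _) (fun _ _ => by positivity) hbound
    _ = K ^ p * (∫ x in I, |θ x| ^ p) * (L * a) := by
        rw [integral_const_mul, Measure.volume_eq_prod, measureReal_prod_prod,
          Real.volume_real_Ioo_of_le hL, Real.volume_real_Ioo_of_le ha.le, sub_zero, sub_zero]

end bumpLift

theorem technical_lifting_lemma_general
    (l0 l1 G0 G1 : ℝ) (hl0 : 0 < l0) (hG0 : 0 < G0)
    (l : ℝ → ℝ)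
    (hlb : ∀ x ∈ Icc (0 : ℝ) 1, l0 ≤ l x ∧ l x < l1)
    (G : ℝ → ℝ → ℝ)
    (hGb : ∀ x ∈ Ioo (0 : ℝ) 1, ∀ y : ℝ, G0 ≤ G x y ∧ G x y ≤ G1)
    (p : ℝ) (hp : 1 ≤ p) :
    ∃ C : ℝ, 0 < C ∧
      ∀ θ : ℝ → ℝ, Measurable θ →
        MemLp θ (ENNReal.ofReal p) (volume.restrict (Ioo (0 : ℝ) 1)) →
        ∃ ψ : ℝ × ℝ × ℝ → ℝ, Measurable ψ ∧
          -- (1) ψ does not depend on y₁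
          (∀ q q' : ℝ × ℝ × ℝ, q ∈ Wset G l → q' ∈ Wset G l →
            q.1 = q'.1 → q.2.2 = q'.2.2 → ψ q = ψ q') ∧
          -- (2) ψ vanishes for y₂ ≥ G₀
          (∀ q : ℝ × ℝ × ℝ, G0 ≤ q.2.2 → ψ q = 0) ∧
          -- (3) the average over the cell Y*(x) recovers θ
          (∀ x ∈ Ioo (0 : ℝ) 1,
            (1 / l x) *
              (∫ y in {y : ℝ × ℝ | y.1 ∈ Ioo (0 : ℝ) (l x) ∧ y.2 ∈ Ioo (0 : ℝ) (G x y.1)},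
                ψ (x, y.1, y.2)) = θ x) ∧
          -- (4) L^p bound
          (∫ q in Wset G l, |ψ q| ^ p) ^ (1 / p)
            ≤ C * (∫ x in Ioo (0 : ℝ) 1, |θ x| ^ p) ^ (1 / p) ∧
          -- explicit formula: ψ(x,y₁,y₂) = (12/G₀³)·ṽ(y₂)·θ(x)
          ψ = fun q =>
            (12 / G0 ^ 3) *
              (if q.2.2 ∈ Ioo (0 : ℝ) G0 then -q.2.2 ^ 2 / 2 + G0 * q.2.2 / 2 else 0) *
              θ q.1 := by
  have hp0 : 0 < p := zero_lt_one.trans_le hp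
  have hl : ∀ x ∈ Ioo (0 : ℝ) 1, 0 < l x ∧ l x < l1 := fun x hx =>
    ⟨hl0.trans_le (hlb x (Ioo_subset_Icc_self hx)).1, (hlb x (Ioo_subset_Icc_self hx)).2⟩
  have hl1 : 0 < l1 := by
    obtain ⟨h₁, h₂⟩ := hlb 0 (left_mem_Icc.2 zero_le_one)
    linarith
  refine ⟨3 / (2 * G0) * (l1 * G0) ^ (1 / p), by positivity, fun θ hθ hθLp =>
    ⟨bumpLift G0 θ, measurable_bumpLift hθ, ?_, fun q hq => bumpLift_eq_zero_of_le hq, ?_, ?_,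
      rfl⟩⟩
  · rintro q q' - - h₁ h₂
    simp only [bumpLift, h₁, h₂]
  · intro x hx
    exact one_div_mul_setIntegral_bumpLift hG0 (hl x hx).1 x
      (fun y hy => ⟨hy.1, hy.2.1, hy.2.2.trans_le (hGb x hx y.1).1⟩) fun y hy => ⟨hy.1, trivial⟩
  · have hθp : Integrable (fun x => |θ x| ^ p) (volume.restrict (Ioo 0 1)) := by
      simpa [Real.norm_eq_abs, ENNReal.toReal_ofReal hp0.le] using
        hθLp.integrable_norm_rpow (ENNReal.ofReal_pos.2 hp0).ne' ENNReal.ofReal_ne_top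
    have hW : Wset G l ⊆ Ioo 0 1 ×ˢ (Ioo 0 l1 ×ˢ univ) := fun q hq =>
      ⟨hq.1, ⟨hq.2.1.1, hq.2.1.2.trans (hl q.1 hq.1).2⟩, trivial⟩
    exact rpow_one_div_le_mul_of_le_mul_rpow hp0 (integral_nonneg fun _ => by positivity)
      (integral_nonneg fun _ => by positivity) (by positivity) (by positivity)
      (setIntegral_rpow_abs_bumpLift_le hG0 hp0 hl1.le hθ measurableSet_Ioo hθp hW)

/-- Technical lifting lemma (Lemma 4.9). -/
theorem technical_lifting_lemma
    (l0 l1 G0 G1 : ℝ) (hl0 : 0 < l0) (hl01 : l0 < l1) (hG0 : 0 < G0) (hG01 : G0 ≤ G1)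
    (l : ℝ → ℝ) (hlC1 : ContDiffOn ℝ 1 l (Ioo 0 1))
    (hlb : ∀ x ∈ Icc (0 : ℝ) 1, l0 ≤ l x ∧ l x < l1)
    (G : ℝ → ℝ → ℝ)
    (hGcont : ContinuousOn (fun z : ℝ × ℝ => G z.1 z.2) (Ioo 0 1 ×ˢ (univ : Set ℝ)))
    (hGb : ∀ x ∈ Ioo (0 : ℝ) 1, ∀ y : ℝ, G0 ≤ G x y ∧ G x y ≤ G1)
    (hGper : ∀ x ∈ Ioo (0 : ℝ) 1, ∀ y : ℝ, G x (y + l x) = G x y)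
    (p : ℝ) (hp : 1 ≤ p) :
    ∃ C : ℝ, 0 < C ∧
      ∀ θ : ℝ → ℝ, Measurable θ →
        MemLp θ (ENNReal.ofReal p) (volume.restrict (Ioo (0 : ℝ) 1)) →
        ∃ ψ : ℝ × ℝ × ℝ → ℝ, Measurable ψ ∧
          -- (1) ψ does not depend on y₁
          (∀ q q' : ℝ × ℝ × ℝ, q ∈ Wset G l → q' ∈ Wset G l →
            q.1 = q'.1 → q.2.2 = q'.2.2 → ψ q = ψ q') ∧
          -- (2) ψ vanishes for y₂ ≥ G₀
          (∀ q : ℝ × ℝ × ℝ, G0 ≤ q.2.2 → ψ q = 0) ∧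
          -- (3) the average over the cell Y*(x) recovers θ
          (∀ x ∈ Ioo (0 : ℝ) 1,
            (1 / l x) *
              (∫ y in {y : ℝ × ℝ | y.1 ∈ Ioo (0 : ℝ) (l x) ∧ y.2 ∈ Ioo (0 : ℝ) (G x y.1)},
                ψ (x, y.1, y.2)) = θ x) ∧
          -- (4) L^p bound
          (∫ q in Wset G l, |ψ q| ^ p) ^ (1 / p)
            ≤ C * (∫ x in Ioo (0 : ℝ) 1, |θ x| ^ p) ^ (1 / p) ∧
          -- explicit formula: ψ(x,y₁,y₂) = (12/G₀³)·ṽ(y₂)·θ(x)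
          ψ = fun q =>
            (12 / G0 ^ 3) *
              (if q.2.2 ∈ Ioo (0 : ℝ) G0 then -q.2.2 ^ 2 / 2 + G0 * q.2.2 / 2 else 0) *
              θ q.1 :=
  technical_lifting_lemma_general l0 l1 G0 G1 hl0 hG0 l hlb G hGb p hp
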